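/- For every positive integer k, 3k² − k − (1/2)·Σ_{i=1}^{2k} ( 4i − 2 + 4⌊i/(k+1)⌋ + 8(i−k−1)⌊i/(k+2)⌋ − (12i−11)²/(6(6k−1)) ) = k(84k² − 138k + 19)/(6(6k−1)), as an identity of rational numbers. -/
import Mathlib

open Finset

lemma Ioc_eq_Icc (n : ℕ) : Finset.Ioc 0 n = Finset.Icc 1 n := by
  ext x; simp; omega

lemma sum_id' (n : ℕ) : ∑ i ∈ Icc 1 n, (i:ℚ) = n*(n+1)/2 := by
  induction n with
  | zero => simp
  | succ n ih =>
    rw [Finset.sum_Icc_succ_top (by omega)]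
    push_cast [ih]; ring

lemma sum_sq' (n : ℕ) : ∑ i ∈ Icc 1 n, (i:ℚ)^2 = n*(n+1)*(2*n+1)/6 := by
  induction n with
  | zero => simp
  | succ n ih =>
    rw [Finset.sum_Icc_succ_top (by omega)]
    push_cast [ih]; ring

lemma sum_poly (n : ℕ) (a b d : ℚ) :
    ∑ i ∈ Icc 1 n, (a*(i:ℚ)^2 + b*(i:ℚ) + d)
      = a*((n:ℚ)*(n+1)*(2*n+1)/6) + b*((n:ℚ)*(n+1)/2) + d*n := by
  rw [Finset.sum_add_distrib, Finset.sum_add_distrib, ← Finset.mul_sum, ← Finset.mul_sum,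
    sum_id', sum_sq', Finset.sum_const, Nat.card_Icc]
  have : ((n + 1 - 1 : ℕ) : ℚ) = n := by push_cast [Nat.add_sub_cancel]; ring
  rw [nsmul_eq_mul, this]; ring

lemma fl (i m : ℕ) (h : i < 2*m) :
    ⌊(i:ℚ)/(m:ℚ)⌋ = if m ≤ i then 1 else 0 := by
  have hm : 0 < m := by omega
  have hm' : (0:ℚ) < m := by exact_mod_cast hm
  split_ifs with hmi
  · rw [Int.floor_eq_iff]
    push_cast
    constructor
    · rw [le_div_iff₀ hm']
      have : (m:ℚ) ≤ i := by exact_mod_cast hmi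
      linarith
    · rw [div_lt_iff₀ hm']
      have : (i:ℚ) < 2*m := by exact_mod_cast h
      linarith
  · rw [Int.floor_eq_iff]
    push_cast
    constructor
    · positivity
    · rw [div_lt_iff₀ hm']
      have : (i:ℚ) < m := by exact_mod_cast (by omega : i < m)
      linarith

theorem stmt_15 (k : ℕ) (hk : 0 < k) :
    3 * (k : ℚ) ^ 2 - (k : ℚ) -
      (1 / 2) * ∑ i ∈ Finset.Icc 1 (2 * k),
        (4 * (i : ℚ) - 2 + 4 * (⌊(i : ℚ) / ((k : ℚ) + 1)⌋ : ℚ) +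
          8 * ((i : ℚ) - (k : ℚ) - 1) * (⌊(i : ℚ) / ((k : ℚ) + 2)⌋ : ℚ) -
          (12 * (i : ℚ) - 11) ^ 2 / (6 * (6 * (k : ℚ) - 1))) =
      (k : ℚ) * (84 * (k : ℚ) ^ 2 - 138 * (k : ℚ) + 19) / (6 * (6 * (k : ℚ) - 1)) := by
  have hk1 : (1:ℚ) ≤ k := by exact_mod_cast hk
  set c : ℚ := 6 * (6 * (k:ℚ) - 1) with hc_def
  have hc : c ≠ 0 := by rw [hc_def]; nlinarith
  set f : ℕ → ℚ := fun i =>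
    4 * (i : ℚ) - 2 + 4 * (⌊(i : ℚ) / ((k : ℚ) + 1)⌋ : ℚ) +
      8 * ((i : ℚ) - (k : ℚ) - 1) * (⌊(i : ℚ) / ((k : ℚ) + 2)⌋ : ℚ) -
      (12 * (i : ℚ) - 11) ^ 2 / c with hf
  have hsplit1 : ∑ i ∈ Ioc 0 k, f i + ∑ i ∈ Ioc k (2*k), f i = ∑ i ∈ Ioc 0 (2*k), f i :=
    Finset.sum_Ioc_consecutive _ (by omega) (by omega)
  have hsplit2 : ∑ i ∈ Ioc k (k+1), f i + ∑ i ∈ Ioc (k+1) (2*k), f i = ∑ i ∈ Ioc k (2*k), f i :=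
    Finset.sum_Ioc_consecutive _ (by omega) (by omega)
  have e0 : ∑ i ∈ Ioc 0 k, f i =
      (-144/c)*((k:ℚ)*(k+1)*(2*k+1)/6) + (4+264/c)*((k:ℚ)*(k+1)/2) + (-2-121/c)*k := by
    rw [Ioc_eq_Icc, ← sum_poly k (-144/c) (4+264/c) (-2-121/c)]
    apply Finset.sum_congr rfl
    intro i hi
    simp only [Finset.mem_Icc] at hi
    simp only [hf]
    have h1 : ⌊(i:ℚ)/((k:ℚ)+1)⌋ = 0 := by
      have := fl i (k+1) (by omega)
      rw [if_neg (by omega)] at this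
      push_cast at this; exact this
    have h2 : ⌊(i:ℚ)/((k:ℚ)+2)⌋ = 0 := by
      have := fl i (k+2) (by omega)
      rw [if_neg (by omega)] at this
      push_cast at this; exact this
    rw [h1, h2]
    push_cast
    field_simp
    ring
  have e1 : ∑ i ∈ Ioc k (k+1), f i =
      4*((k:ℚ)+1) - 2 + 4 - (12*((k:ℚ)+1) - 11)^2/c := by
    rw [show Finset.Ioc k (k+1) = {k+1} by ext x; simp; try omega]
    rw [Finset.sum_singleton]
    simp only [hf]
    have h1 : ⌊(((k:ℕ):ℚ)+1)/((k:ℚ)+1)⌋ = 1 := by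
      have := fl (k+1) (k+1) (by omega)
      rw [if_pos (by omega)] at this
      push_cast at this; exact this
    have h2 : ⌊(((k:ℕ):ℚ)+1)/((k:ℚ)+2)⌋ = 0 := by
      have := fl (k+1) (k+2) (by omega)
      rw [if_neg (by omega)] at this
      push_cast at this; exact this
    push_cast
    rw [h1, h2]
    push_cast
    ring
  have e2 : ∑ i ∈ Ioc (k+1) (2*k), f i =
      ((-144/c)*((2*(k:ℚ))*(2*(k:ℚ)+1)*(2*(2*(k:ℚ))+1)/6) + (12+264/c)*((2*(k:ℚ))*(2*(k:ℚ)+1)/2) + (-8*(k:ℚ)-6-121/c)*(2*(k:ℚ)))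
      - ((-144/c)*(((k:ℚ)+1)*(((k:ℚ)+1)+1)*(2*((k:ℚ)+1)+1)/6) + (12+264/c)*(((k:ℚ)+1)*(((k:ℚ)+1)+1)/2) + (-8*(k:ℚ)-6-121/c)*((k:ℚ)+1)) := by
    have key : ∀ i ∈ Ioc (k+1) (2*k), f i =
        (-144/c)*(i:ℚ)^2 + (12+264/c)*(i:ℚ) + (-8*(k:ℚ)-6-121/c) := by
      intro i hi
      simp only [Finset.mem_Ioc] at hi
      simp only [hf]
      have h1 : ⌊(i:ℚ)/((k:ℚ)+1)⌋ = 1 := by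
        have := fl i (k+1) (by omega)
        rw [if_pos (by omega)] at this
        push_cast at this; exact this
      have h2 : ⌊(i:ℚ)/((k:ℚ)+2)⌋ = 1 := by
        have := fl i (k+2) (by omega)
        rw [if_pos (by omega)] at this
        push_cast at this; exact this
      rw [h1, h2]
      push_cast
      field_simp
      ring
    rw [Finset.sum_congr rfl key]
    have hsub : ∑ i ∈ Icc 1 (k+1), ((-144/c)*(i:ℚ)^2 + (12+264/c)*(i:ℚ) + (-8*(k:ℚ)-6-121/c))
        + ∑ i ∈ Ioc (k+1) (2*k), ((-144/c)*(i:ℚ)^2 + (12+264/c)*(i:ℚ) + (-8*(k:ℚ)-6-121/c))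
        = ∑ i ∈ Icc 1 (2*k), ((-144/c)*(i:ℚ)^2 + (12+264/c)*(i:ℚ) + (-8*(k:ℚ)-6-121/c)) := by
      rw [← Ioc_eq_Icc, ← Ioc_eq_Icc]
      exact Finset.sum_Ioc_consecutive _ (by omega) (by omega)
    have hA := sum_poly (k+1) (-144/c) (12+264/c) (-8*(k:ℚ)-6-121/c)
    have hB := sum_poly (2*k) (-144/c) (12+264/c) (-8*(k:ℚ)-6-121/c)
    push_cast at hA hB
    rw [hA, hB] at hsub
    linarith
  rw [show Finset.Icc 1 (2*k) = Finset.Ioc 0 (2*k) from (Ioc_eq_Icc _).symm]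
  rw [show (∑ i ∈ Ioc 0 (2*k), f i) = ∑ i ∈ Ioc 0 k, f i + (∑ i ∈ Ioc k (k+1), f i + ∑ i ∈ Ioc (k+1) (2*k), f i) by rw [hsplit2, hsplit1]]
  rw [e0, e1, e2]
  field_simp
  ring
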